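/- arXiv:1612.04466 — 4 statements merged into one kernel-verified Lean document; each statement's English description precedes it below -/
import Mathlib

section
/- In the graph on a collection 𝒫 of finite sets (closed under unions/intersections as in the square lemma setting) where edges join sets with symmetric difference of size one, every embedded subgraph isomorphic to the 1-skeleton of an n-cube has a unique maximal element C⁺ and unique minimal element C⁻ under inclusion, and its vertex set is exactly the interval [C⁻, C⁺] = {R ∈ 𝒫 : C⁻ ⊆ R ⊆ C⁺}; moreover |C⁺| − |C⁻| = n. -/
/-!
View the cube as `Finset (Fin n)`, flipping coordinate `i` being `s ↦ s ∆ {i}`; each flip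
changes the embedded set by exactly one element. Around a square `s, s ∆ {i}, s ∆ {j},
s ∆ {i, j}` the two paths give the same diagonal, and injectivity makes the four changed elements
pair up so that opposite edges change the same element. The cube is connected through squares,
hence flipping `i` always changes the same element `a i`, `a` is injective, and
`f s = f ∅ ∆ a(s)`. The image is therefore the interval from `f ∅ \ a(univ)` to
`f ∅ ∪ a(univ)`, of length `n`.
-/

open scoped symmDiff
open Finset Function

theorem sdiff_le_and_le_sup_iff_symmDiff_le {α : Type*} [GeneralizedCoheytingAlgebra α]
    {a b c : α} : a \ b ≤ c ∧ c ≤ a ⊔ b ↔ a ∆ c ≤ b := by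
  rw [symmDiff_le_iff, sdiff_le_iff, sup_comm b c]

namespace Finset

variable {α : Type*} [DecidableEq α]

theorem insert_eq_symmDiff_singleton {a : α} {s : Finset α} (ha : a ∉ s) :
    insert a s = s ∆ {a} := by
  rw [(symmDiff_eq_sup s {a}).2 (disjoint_singleton_right.2 ha), insert_eq, union_comm,
    sup_eq_union]

theorem eq_of_singleton_symmDiff_eq {a b c d : α} (hab : a ≠ b) (hac : a ≠ c)
    (h : ({a} ∆ {b} : Finset α) = {c} ∆ {d}) : a = d := by
  have ha : a ∈ ({c} ∆ {d} : Finset α) := h ▸ by simp [mem_symmDiff, hab]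
  simpa [mem_symmDiff, hac] using ha

end Finset

section CubeEmbedding

variable {ι A : Type*} [DecidableEq ι] [DecidableEq A] {g : Finset ι → Finset A}

theorem symmDiff_flip_eq_of_ne (hg : ∀ s i, #(g s ∆ g (s ∆ {i})) = 1) (hinj : Injective g)
    {i j : ι} (hij : i ≠ j) (s : Finset ι) :
    g s ∆ g (s ∆ {i}) = g (s ∆ {j}) ∆ g (s ∆ {j} ∆ {i}) := by
  obtain ⟨a₁, h₁⟩ := card_eq_one.mp (hg s i)
  obtain ⟨a₂, h₂⟩ := card_eq_one.mp (hg s j)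
  obtain ⟨a₃, h₃⟩ := card_eq_one.mp (hg (s ∆ {i}) j)
  obtain ⟨a₄, h₄⟩ := card_eq_one.mp (hg (s ∆ {j}) i)
  have hij' : ({i} : Finset ι) ≠ {j} := by simpa using hij
  have hside : g (s ∆ {i}) ∆ g (s ∆ {j}) = {a₁} ∆ {a₂} := by
    rw [← h₁, ← h₂, symmDiff_symmDiff_symmDiff_comm, symmDiff_self, bot_symmDiff]
  have h₁₂ : a₁ ≠ a₂ := by
    rintro rfl
    rw [symmDiff_self, symmDiff_eq_bot] at hside
    exact hij' (symmDiff_right_injective s (hinj hside))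
  have hdiag : g s ∆ g (s ∆ {j} ∆ {i}) = {a₁} ∆ {a₃} := by
    rw [← h₁, ← h₃, symmDiff_right_comm s {i} {j}, symmDiff_assoc (g s),
      symmDiff_symmDiff_cancel_left]
  have h₁₃ : a₁ ≠ a₃ := by
    rintro rfl
    rw [symmDiff_self, symmDiff_eq_bot] at hdiag
    have hs : s ∆ ({j} ∆ {i}) = s := by rw [← symmDiff_assoc, ← hinj hdiag]
    exact hij' (symmDiff_eq_bot.mp (symmDiff_eq_left.mp hs)).symm
  have hdiag' : g s ∆ g (s ∆ {j} ∆ {i}) = {a₂} ∆ {a₄} := by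
    rw [← h₂, ← h₄, symmDiff_assoc (g s), symmDiff_symmDiff_cancel_left]
  rw [h₁, h₄, eq_of_singleton_symmDiff_eq h₁₃ h₁₂ (hdiag.symm.trans hdiag')]

theorem symmDiff_flip_eq_symmDiff_flip_empty (hg : ∀ s i, #(g s ∆ g (s ∆ {i})) = 1)
    (hinj : Injective g) (s : Finset ι) (i : ι) :
    g s ∆ g (s ∆ {i}) = g ∅ ∆ g (∅ ∆ {i}) := by
  induction s using Finset.induction_on with
  | empty => rfl
  | insert j t hj ih =>
    rw [insert_eq_symmDiff_singleton hj]
    obtain rfl | hij := eq_or_ne i j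
    · rw [symmDiff_symmDiff_cancel_right, symmDiff_comm, ih]
    · rw [← symmDiff_flip_eq_of_ne hg hinj hij t, ih]

theorem exists_embedding_eq_symmDiff_map (hg : ∀ s i, #(g s ∆ g (s ∆ {i})) = 1)
    (hinj : Injective g) : ∃ a : ι ↪ A, ∀ s, g s = g ∅ ∆ s.map a := by
  choose a ha using fun i => card_eq_one.mp (hg ∅ i)
  have hflip : ∀ s i, g (s ∆ {i}) = g s ∆ {a i} := fun s i => by
    rw [← ha, ← symmDiff_flip_eq_symmDiff_flip_empty hg hinj, symmDiff_symmDiff_cancel_left]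
  have ha_inj : Injective a := fun i j h => by
    have : g (∅ ∆ {i}) = g (∅ ∆ {j}) := by rw [hflip, hflip, h]
    simpa using hinj this
  refine ⟨⟨a, ha_inj⟩, fun s => ?_⟩
  induction s using Finset.induction_on with
  | empty => exact (symmDiff_bot _).symm
  | insert j t hj ih =>
    have hj' : a j ∉ t.map ⟨a, ha_inj⟩ := by simpa using hj
    rw [map_insert, Embedding.coeFn_mk, insert_eq_symmDiff_singleton hj',
      insert_eq_symmDiff_singleton hj, hflip, ih, symmDiff_assoc]

end CubeEmbedding

theorem range_symmDiff_map {ι A : Type*} [DecidableEq A] [Fintype ι] (C : Finset A)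
    (a : ι ↪ A) :
    Set.range (fun s : Finset ι => C ∆ s.map a) =
      {R | C \ univ.map a ⊆ R ∧ R ⊆ C ∪ univ.map a} := by
  ext R
  simp only [Set.mem_range, Set.mem_ofPred_eq]
  rw [← sup_eq_union, sdiff_le_and_le_sup_iff_symmDiff_le, subset_map_iff]
  constructor
  · rintro ⟨s, rfl⟩
    exact ⟨s, subset_univ s, symmDiff_symmDiff_cancel_left C _⟩
  · rintro ⟨s, -, hs⟩
    exact ⟨s, by rw [← hs, symmDiff_symmDiff_cancel_left]⟩

theorem cube_has_source_and_sink_general {A : Type*} [DecidableEq A] (Pols : Set (Finset A))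
    (n : ℕ) (f : (Fin n → Bool) → Finset A)
    (hinj : Function.Injective f)
    (hmem : ∀ x, f x ∈ Pols)
    (hadj : ∀ x y, (Finset.univ.filter fun i => x i ≠ y i).card = 1 ↔
      (symmDiff (f x) (f y)).card = 1) :
    ∃ Cm Cp : Finset A, Cm ∈ Set.range f ∧ Cp ∈ Set.range f ∧
      (∀ x, Cm ⊆ f x ∧ f x ⊆ Cp) ∧
      Set.range f = {R | R ∈ Pols ∧ Cm ⊆ R ∧ R ⊆ Cp} ∧
      Cp.card = Cm.card + n := by
  set χ : Finset (Fin n) → Fin n → Bool := fun s i => decide (i ∈ s)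
  have hχ_surj : Surjective χ := fun x => ⟨univ.filter (x ·), by ext; simp [χ]⟩
  have hχ_inj : Injective χ := fun s t h => by ext i; simpa [χ] using congrFun h i
  have hχ_flip : ∀ s i, #(f (χ s) ∆ f (χ (s ∆ {i}))) = 1 := fun s i => by
    rw [← hadj]
    convert card_singleton i
    ext j
    obtain rfl | hji := eq_or_ne j i <;> simp [χ, mem_symmDiff, *]
  obtain ⟨a, ha⟩ := exists_embedding_eq_symmDiff_map hχ_flip (hinj.comp hχ_inj)
  set C := f (χ ∅)
  set B := univ.map a
  have hrange : Set.range f = {R | C \ B ⊆ R ∧ R ⊆ C ∪ B} := by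
    rw [← hχ_surj.range_comp, ← range_symmDiff_map]
    exact congrArg Set.range (funext ha)
  have hsub : C \ B ⊆ C ∪ B := sdiff_subset.trans subset_union_left
  refine ⟨C \ B, C ∪ B, hrange ▸ ⟨subset_rfl, hsub⟩, hrange ▸ ⟨hsub, subset_rfl⟩,
    fun x => hrange.subset ⟨x, rfl⟩, ?_, ?_⟩
  · refine hrange.trans (Set.ext fun R => ⟨fun hR => ⟨?_, hR⟩, And.right⟩)
    obtain ⟨x, rfl⟩ := hrange.symm.subset hR
    exact hmem x
  · rw [← card_sdiff_add_card, card_map, card_univ, Fintype.card_fin]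

/-- In the graph on a collection of finite sets (closed under unions below a
common superset and intersections above a common subset) whose edges join sets
with symmetric difference of size one, every embedded subgraph isomorphic to the
1-skeleton of an `n`-cube (the Hamming graph on `Fin n → Bool`) has a unique
minimal element `C⁻` and a unique maximal element `C⁺` under inclusion, its
vertex set is exactly the interval `{R ∈ Pols : C⁻ ⊆ R ⊆ C⁺}`, and
`|C⁺| - |C⁻| = n`. -/
theorem cube_has_source_and_sink {A : Type*} [DecidableEq A] (Pols : Set (Finset A))
    (hUnion : ∀ P Q R : Finset A, P ∈ Pols → Q ∈ Pols → R ∈ Pols → P ⊆ R → Q ⊆ R → P ∪ Q ∈ Pols)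
    (hInter : ∀ P Q R : Finset A, P ∈ Pols → Q ∈ Pols → R ∈ Pols → R ⊆ P → R ⊆ Q → P ∩ Q ∈ Pols)
    (n : ℕ) (f : (Fin n → Bool) → Finset A)
    (hinj : Function.Injective f)
    (hmem : ∀ x, f x ∈ Pols)
    (hadj : ∀ x y, (Finset.univ.filter fun i => x i ≠ y i).card = 1 ↔
      (symmDiff (f x) (f y)).card = 1) :
    ∃ Cm Cp : Finset A, Cm ∈ Set.range f ∧ Cp ∈ Set.range f ∧
      (∀ x, Cm ⊆ f x ∧ f x ⊆ Cp) ∧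
      Set.range f = {R | R ∈ Pols ∧ Cm ⊆ R ∧ R ⊆ Cp} ∧
      Cp.card = Cm.card + n :=
  cube_has_source_and_sink_general Pols n f hinj hmem hadj
end

section
/- Let 𝒫 be a collection of finite subsets of a set A (polygonalisations) and define, for P ∈ 𝒫 and α ∈ P, that α is removable from P if P \ {α} ∈ 𝒫. Suppose e₁, …, e_k (k ≥ 3) are edges of the inclusion graph incident to P with e_i = {P, Q_i} and arc(e_i) = α_i pairwise distinct, such that every (k−1)-subset of {α_1, …, α_k} satisfies: P with that subset removed (if all Q_i ⊆ P) or added lies in 𝒫 together with all intermediate sets, but the full set {α_1,…,α_k} does not extend to a k-cube. If for some i we had Q_i ⊋ P (i.e. α_i ∉ P and addable) and α_i is disjoint-compatible with all elements of the top vertex C⁺ of a (k−1)-cube containing the other k−1 edges, then C⁺ ∪ {α_i} ∈ 𝒫 and the interval [C⁻, C⁺ ∪ {α_i}] is a k-cube containing all k edges — a contradiction. Hence in a positive curvature system all edges point downward: P ⊋ Q_i for every i. -/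
/-!
Suppose the edge `i₀` points up, `Q i₀ = P ∪ {a}`, and let `[Cm, Cp]` be the `(k-1)`-cube
through the other `k - 1` edges. Their labels are `k - 1` distinct elements of `Cp \ Cm`, a set of
size `k - 1`, so they exhaust it; hence `a ∉ Cp`, and every `α ∈ P \ Cm` labels a downward edge
`Q j = P \ {α}`. As `k ≥ 3`, the cube omitting a third edge contains `Q j` and `Q i₀`, so
`(P \ {α}) ∪ {a}` is a polygonalisation. Intersecting these sets over all `α ∈ P \ Cm` (they all
contain `Cm`) gives `Cm ∪ {a}`, and the upward addability property then fills the interval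
`[Cm, Cp ∪ {a}]`, a `k`-cube containing all `k` edges.
-/

open Finset Function

section

variable {A : Type*} [DecidableEq A]

theorem Finset.eq_erase_or_eq_insert_of_symmDiff_eq_singleton {P Q : Finset A} {α : A}
    (h : symmDiff P Q = {α}) : (α ∈ P ∧ Q = P.erase α) ∨ (α ∉ P ∧ Q = insert α P) := by
  have hQ : Q = symmDiff P {α} := by rw [← h, symmDiff_symmDiff_cancel_left]
  by_cases hα : α ∈ P
  · refine .inl ⟨hα, ?_⟩
    ext x
    simp only [hQ, mem_symmDiff, mem_singleton, mem_erase]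
    grind
  · refine .inr ⟨hα, ?_⟩
    ext x
    simp only [hQ, mem_symmDiff, mem_singleton, mem_insert]
    grind

theorem Finset.symmDiff_subset_sdiff_of_mem_Icc {Cm Cp P Q : Finset A} (hP : P ∈ Set.Icc Cm Cp)
    (hQ : Q ∈ Set.Icc Cm Cp) : symmDiff P Q ⊆ Cp \ Cm := by
  intro x hx
  rcases mem_symmDiff.mp hx with ⟨hxP, hxQ⟩ | ⟨hxQ, hxP⟩
  · exact mem_sdiff.mpr ⟨hP.2 hxP, fun h => hxQ (hQ.1 h)⟩
  · exact mem_sdiff.mpr ⟨hQ.2 hxQ, fun h => hxP (hP.1 h)⟩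

theorem Fin.exists_ne_ne {k : ℕ} (hk : 3 ≤ k) (i j : Fin k) : ∃ l, l ≠ i ∧ l ≠ j := by
  have hcard : ({i, j} : Finset (Fin k)).card < (univ : Finset (Fin k)).card := by
    rw [card_univ, Fintype.card_fin]
    exact card_le_two.trans_lt (by omega)
  obtain ⟨l, -, hl⟩ := exists_mem_notMem_of_card_lt_card hcard
  simp only [mem_insert, mem_singleton, not_or] at hl
  exact ⟨l, hl⟩

variable {Pols : Set (Finset A)}

theorem sdiff_mem_of_forall_erase_mem
    (hInter : ∀ P Q R : Finset A, P ∈ Pols → Q ∈ Pols → R ∈ Pols → R ⊆ P → R ⊆ Q → P ∩ Q ∈ Pols)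
    {R X : Finset A} (hR : R ∈ Pols) (hX : X ∈ Pols) (T : Finset A) (hRX : R ⊆ X \ T)
    (hT : ∀ α ∈ T, X.erase α ∈ Pols) : X \ T ∈ Pols := by
  induction T using Finset.induction_on with
  | empty => simpa using hX
  | insert α T _ ih =>
    have hRT : R ⊆ X \ T := hRX.trans (sdiff_subset_sdiff subset_rfl (subset_insert _ _))
    have hsplit : X \ insert α T = (X \ T) ∩ X.erase α := by
      ext x
      simp only [mem_sdiff, mem_insert, mem_inter, mem_erase]
      tauto
    rw [hsplit]
    refine hInter _ _ R (ih hRT fun β hβ => hT β (mem_insert_of_mem hβ))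
      (hT α (mem_insert_self α T)) hR hRT ?_
    rw [hsplit] at hRX
    exact hRX.trans inter_subset_right

theorem forall_mem_of_subset_insert
    (hUp : ∀ (P Q : Finset A) (a : A), P ∈ Pols → Q ∈ Pols → P ⊆ Q →
      insert a P ∈ Pols → insert a Q ∈ Pols)
    {Cm Cp : Finset A} {a : A} (haCm : a ∉ Cm) (hint : ∀ R, Cm ⊆ R → R ⊆ Cp → R ∈ Pols)
    (hins : insert a Cm ∈ Pols) : ∀ R, Cm ⊆ R → R ⊆ insert a Cp → R ∈ Pols := by
  intro R hCmR hRCp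
  rw [subset_insert_iff] at hRCp
  by_cases haR : a ∈ R
  · have hCmR' : Cm ⊆ R.erase a := subset_erase.mpr ⟨hCmR, haCm⟩
    have hCm : Cm ∈ Pols := hint Cm subset_rfl (hCmR'.trans hRCp)
    rw [← insert_erase haR]
    exact hUp Cm _ a hCm (hint _ hCmR' hRCp) hCmR' hins
  · rw [erase_eq_of_notMem haR] at hRCp
    exact hint R hCmR hRCp

variable {k : ℕ} {P : Finset A} {Q : Fin k → Finset A} {b : Fin k → A}

theorem image_erase_eq_sdiff_of_cube (hb : ∀ i, symmDiff P (Q i) = {b i}) (hbinj : Injective b)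
    {Cm Cp : Finset A} {i₀ : Fin k} (hCmCp : Cm ⊆ Cp) (hcard : Cp.card = Cm.card + (k - 1))
    (hCmP : Cm ⊆ P) (hPCp : P ⊆ Cp) (hedge : ∀ i, i ≠ i₀ → Cm ⊆ Q i ∧ Q i ⊆ Cp) :
    (univ.erase i₀).image b = Cp \ Cm := by
  refine eq_of_subset_of_card_le ?_ ?_
  · intro x hx
    obtain ⟨i, hi, rfl⟩ := mem_image.mp hx
    exact symmDiff_subset_sdiff_of_mem_Icc ⟨hCmP, hPCp⟩ (hedge i (ne_of_mem_erase hi))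
      (by rw [hb i]; exact mem_singleton_self _)
  · rw [card_sdiff_of_subset hCmCp, card_image_of_injective _ hbinj,
      card_erase_of_mem (mem_univ _), card_univ, Fintype.card_fin]
    omega

theorem insert_mem_of_subcubes (hk : 3 ≤ k)
    (hsubcubes : ∀ j : Fin k, ∃ Cm Cp : Finset A,
      Cm ∈ Pols ∧ Cp ∈ Pols ∧ Cm ⊆ Cp ∧ Cp.card = Cm.card + (k - 1) ∧
      (∀ R : Finset A, Cm ⊆ R → R ⊆ Cp → R ∈ Pols) ∧
      Cm ⊆ P ∧ P ⊆ Cp ∧ ∀ i, i ≠ j → Cm ⊆ Q i ∧ Q i ⊆ Cp)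
    {i₀ : Fin k} (j : Fin k) {a : A} (ha : a ∈ Q i₀) : insert a (Q j) ∈ Pols := by
  obtain ⟨l, hlj, hli₀⟩ := Fin.exists_ne_ne hk j i₀
  obtain ⟨Dm, Dp, -, -, -, -, hint, -, -, hedge⟩ := hsubcubes l
  obtain ⟨hDmQ, hQDp⟩ := hedge j hlj.symm
  exact hint _ (hDmQ.trans (subset_insert _ _)) (insert_subset ((hedge i₀ hli₀.symm).2 ha) hQDp)

theorem insert_mem_of_insert_edge
    (hInter : ∀ P Q R : Finset A, P ∈ Pols → Q ∈ Pols → R ∈ Pols → R ⊆ P → R ⊆ Q → P ∩ Q ∈ Pols)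
    (hk : 3 ≤ k) (hQ : ∀ i, Q i ∈ Pols) (hb : ∀ i, symmDiff P (Q i) = {b i})
    (hsubcubes : ∀ j : Fin k, ∃ Cm Cp : Finset A,
      Cm ∈ Pols ∧ Cp ∈ Pols ∧ Cm ⊆ Cp ∧ Cp.card = Cm.card + (k - 1) ∧
      (∀ R : Finset A, Cm ⊆ R → R ⊆ Cp → R ∈ Pols) ∧
      Cm ⊆ P ∧ P ⊆ Cp ∧ ∀ i, i ≠ j → Cm ⊆ Q i ∧ Q i ⊆ Cp)
    {i₀ : Fin k} (haP : b i₀ ∉ P) (hQi₀ : Q i₀ = insert (b i₀) P)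
    {Cm Cp : Finset A} (hCm : Cm ∈ Pols) (hCmP : Cm ⊆ P) (hPCp : P ⊆ Cp)
    (himage : (univ.erase i₀).image b = Cp \ Cm) : insert (b i₀) Cm ∈ Pols := by
  set a := b i₀
  have hdown : ∀ α ∈ P \ Cm, (insert a P).erase α ∈ Pols := by
    intro α hα
    obtain ⟨hαP, -⟩ := mem_sdiff.mp hα
    obtain ⟨j, -, rfl⟩ := mem_image.mp (himage ▸ sdiff_subset_sdiff hPCp subset_rfl hα :)
    have hQj : Q j = P.erase (b j) := by
      rcases eq_erase_or_eq_insert_of_symmDiff_eq_singleton (hb j) with h | h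
      · exact h.2
      · exact absurd hαP h.1
    rw [erase_insert_of_ne (fun h => haP (by rw [h]; exact hαP)), ← hQj]
    exact insert_mem_of_subcubes hk hsubcubes j (hQi₀ ▸ mem_insert_self a P)
  have hsd : insert a P \ (P \ Cm) = insert a Cm := by
    rw [insert_sdiff_of_notMem _ (fun h => haP (mem_sdiff.mp h).1),
      Finset.sdiff_sdiff_eq_self hCmP]
  rw [← hsd]
  exact sdiff_mem_of_forall_erase_mem hInter hCm (hQi₀ ▸ hQ i₀) _ (hsd ▸ subset_insert _ _) hdown

theorem exists_cube_of_insert_edge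
    (hInter : ∀ P Q R : Finset A, P ∈ Pols → Q ∈ Pols → R ∈ Pols → R ⊆ P → R ⊆ Q → P ∩ Q ∈ Pols)
    (hUp : ∀ (P Q : Finset A) (a : A), P ∈ Pols → Q ∈ Pols → P ⊆ Q →
      insert a P ∈ Pols → insert a Q ∈ Pols)
    (hk : 3 ≤ k) (hQ : ∀ i, Q i ∈ Pols) (hb : ∀ i, symmDiff P (Q i) = {b i})
    (hbinj : Injective b)
    (hsubcubes : ∀ j : Fin k, ∃ Cm Cp : Finset A,
      Cm ∈ Pols ∧ Cp ∈ Pols ∧ Cm ⊆ Cp ∧ Cp.card = Cm.card + (k - 1) ∧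
      (∀ R : Finset A, Cm ⊆ R → R ⊆ Cp → R ∈ Pols) ∧
      Cm ⊆ P ∧ P ⊆ Cp ∧ ∀ i, i ≠ j → Cm ⊆ Q i ∧ Q i ⊆ Cp)
    {i₀ : Fin k} (haP : b i₀ ∉ P) (hQi₀ : Q i₀ = insert (b i₀) P) :
    ∃ Cm Cp : Finset A,
      Cm ∈ Pols ∧ Cp ∈ Pols ∧ Cm ⊆ Cp ∧ Cp.card = Cm.card + k ∧
      (∀ R : Finset A, Cm ⊆ R → R ⊆ Cp → R ∈ Pols) ∧
      Cm ⊆ P ∧ P ⊆ Cp ∧ ∀ i, Cm ⊆ Q i ∧ Q i ⊆ Cp := by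
  set a := b i₀
  obtain ⟨Cm, Cp, hCm, -, hCmCp, hcard, hint, hCmP, hPCp, hedge⟩ := hsubcubes i₀
  have himage := image_erase_eq_sdiff_of_cube hb hbinj hCmCp hcard hCmP hPCp hedge
  have haCm : a ∉ Cm := fun h => haP (hCmP h)
  have haCp : a ∉ Cp := by
    intro haCp
    obtain ⟨i, hi, hia⟩ := mem_image.mp (himage ▸ mem_sdiff.mpr ⟨haCp, haCm⟩ :)
    exact ne_of_mem_erase hi (hbinj hia)
  have hins := insert_mem_of_insert_edge hInter hk hQ hb hsubcubes haP hQi₀ hCm hCmP hPCp himage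
  have hint' := forall_mem_of_subset_insert hUp haCm hint hins
  refine ⟨Cm, insert a Cp, hCm, hint' _ (hCmCp.trans (subset_insert _ _)) subset_rfl, ?_, ?_, hint',
    hCmP, hPCp.trans (subset_insert _ _), fun i => ?_⟩
  · exact hCmCp.trans (subset_insert _ _)
  · rw [card_insert_of_notMem haCp, hcard]
    omega
  · by_cases hi : i = i₀
    · subst hi
      rw [hQi₀]
      exact ⟨hCmP.trans (subset_insert _ _), insert_subset_insert a hPCp⟩
    · exact ⟨(hedge i hi).1, (hedge i hi).2.trans (subset_insert _ _)⟩

end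

theorem positive_curvature_edges_point_down_general {A : Type*} [DecidableEq A]
    (Pols : Set (Finset A))
    (hInter : ∀ P Q R : Finset A, P ∈ Pols → Q ∈ Pols → R ∈ Pols → R ⊆ P → R ⊆ Q → P ∩ Q ∈ Pols)
    (hUp : ∀ (P Q : Finset A) (a : A), P ∈ Pols → Q ∈ Pols → P ⊆ Q →
      insert a P ∈ Pols → insert a Q ∈ Pols)
    (k : ℕ) (hk : 3 ≤ k)
    (P : Finset A)
    (Q : Fin k → Finset A) (hQ : ∀ i, Q i ∈ Pols)
    (hadj : ∀ i, (symmDiff P (Q i)).card = 1)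
    (hlabels : Function.Injective fun i => symmDiff P (Q i))
    (hsubcubes : ∀ j : Fin k, ∃ Cm Cp : Finset A,
      Cm ∈ Pols ∧ Cp ∈ Pols ∧ Cm ⊆ Cp ∧ Cp.card = Cm.card + (k - 1) ∧
      (∀ R : Finset A, Cm ⊆ R → R ⊆ Cp → R ∈ Pols) ∧
      Cm ⊆ P ∧ P ⊆ Cp ∧ ∀ i, i ≠ j → Cm ⊆ Q i ∧ Q i ⊆ Cp)
    (hnocube : ¬ ∃ Cm Cp : Finset A,
      Cm ∈ Pols ∧ Cp ∈ Pols ∧ Cm ⊆ Cp ∧ Cp.card = Cm.card + k ∧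
      (∀ R : Finset A, Cm ⊆ R → R ⊆ Cp → R ∈ Pols) ∧
      Cm ⊆ P ∧ P ⊆ Cp ∧ ∀ i, Cm ⊆ Q i ∧ Q i ⊆ Cp) :
    ∀ i, Q i ⊂ P := by
  choose b hb using fun i => card_eq_one.mp (hadj i)
  have hbinj : Injective b := fun i j hij => hlabels (by simp only [hb, hij])
  intro i
  rcases eq_erase_or_eq_insert_of_symmDiff_eq_singleton (hb i) with ⟨hmem, hQi⟩ | ⟨hnot, hQi⟩
  · rw [hQi]
    exact erase_ssubset hmem
  · exact absurd (exists_cube_of_insert_edge hInter hUp hk hQ hb hbinj hsubcubes hnot hQi) hnocube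

/-- Positive curvature criterion (abstract form): in a collection `Pols` of
finite sets closed under unions below a common superset, intersections above a
common subset, and with the upwards addability property of Remark 2.2, suppose
`e_i = {P, Q i}` (`i < k`, `k ≥ 3`) are edges at `P` with pairwise distinct
labels, such that for each `j` the other `k - 1` edges lie in an embedded
`(k-1)`-cube (an interval of `Pols` of height `k - 1` containing `P` and the
`Q i`, `i ≠ j`), but the whole family lies in no embedded `k`-cube.  Then all
edges point downward: `Q i ⊊ P` for every `i`. -/
theorem positive_curvature_edges_point_down {A : Type*} [DecidableEq A]
    (Pols : Set (Finset A))
    (hUnion : ∀ P Q R : Finset A, P ∈ Pols → Q ∈ Pols → R ∈ Pols → P ⊆ R → Q ⊆ R → P ∪ Q ∈ Pols)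
    (hInter : ∀ P Q R : Finset A, P ∈ Pols → Q ∈ Pols → R ∈ Pols → R ⊆ P → R ⊆ Q → P ∩ Q ∈ Pols)
    (hUp : ∀ (P Q : Finset A) (a : A), P ∈ Pols → Q ∈ Pols → P ⊆ Q →
      insert a P ∈ Pols → insert a Q ∈ Pols)
    (k : ℕ) (hk : 3 ≤ k)
    (P : Finset A) (hP : P ∈ Pols)
    (Q : Fin k → Finset A) (hQ : ∀ i, Q i ∈ Pols)
    (hadj : ∀ i, (symmDiff P (Q i)).card = 1)
    (hlabels : Function.Injective fun i => symmDiff P (Q i))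
    (hsubcubes : ∀ j : Fin k, ∃ Cm Cp : Finset A,
      Cm ∈ Pols ∧ Cp ∈ Pols ∧ Cm ⊆ Cp ∧ Cp.card = Cm.card + (k - 1) ∧
      (∀ R : Finset A, Cm ⊆ R → R ⊆ Cp → R ∈ Pols) ∧
      Cm ⊆ P ∧ P ⊆ Cp ∧ ∀ i, i ≠ j → Cm ⊆ Q i ∧ Q i ⊆ Cp)
    (hnocube : ¬ ∃ Cm Cp : Finset A,
      Cm ∈ Pols ∧ Cp ∈ Pols ∧ Cm ⊆ Cp ∧ Cp.card = Cm.card + k ∧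
      (∀ R : Finset A, Cm ⊆ R → R ⊆ Cp → R ∈ Pols) ∧
      Cm ⊆ P ∧ P ⊆ Cp ∧ ∀ i, Cm ⊆ Q i ∧ Q i ⊆ Cp) :
    ∀ i, Q i ⊂ P :=
  positive_curvature_edges_point_down_general Pols hInter hUp k hk P Q hQ hadj hlabels hsubcubes
    hnocube
end

section
/- Let Y be a graph and Z a graph on a superset of relations: suppose ι : V(Y) → V(Z) is a vertex bijection (onto its image) with the property that every edge of Y maps to an edge of Z, and whenever d_Z(ι(y), ι(y′)) = 1 but {y, y′} is not an edge of Y, one has d_Y(y, y′) ≤ 2; and whenever d_Z(ι(y), ι(y′)) = n ≥ 3 there is a Z-geodesic between them all of whose consecutive pairs are Y-edges. Then for all y, y′: d_Z(ι(y), ι(y′)) ≤ d_Y(y, y′) ≤ d_Z(ι(y), ι(y′)) + 2, provided additionally d_Z = 2 implies d_Y ≤ 4. (Abstract form of Corollary: the crossing graph embeds (1,2)-quasi-isometrically in the arc graph.) -/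
namespace SimpleGraph

theorem Hom.dist_map_le {V W : Type*} {G : SimpleGraph V} {H : SimpleGraph W} (f : G →g H)
    {u v : V} (h : G.Reachable u v) : H.dist (f u) (f v) ≤ G.dist u v := by
  obtain ⟨w, hw⟩ := h.exists_walk_length_eq_dist
  calc H.dist (f u) (f v) ≤ (w.map f).length := dist_le _
    _ = G.dist u v := by rw [Walk.length_map, hw]

end SimpleGraph

theorem crossing_graph_qi_embedding_general {VY VZ : Type*}
    (Y : SimpleGraph VY) (Z : SimpleGraph VZ)
    (hY : Y.Connected)
    (ι : VY → VZ) (hinj : Function.Injective ι)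
    (hedge : ∀ y y', Y.Adj y y' → Z.Adj (ι y) (ι y'))
    (h1 : ∀ y y', Z.dist (ι y) (ι y') = 1 → Y.dist y y' ≤ 2)
    (h2 : ∀ y y', Z.dist (ι y) (ι y') = 2 → Y.dist y y' ≤ 4)
    (h3 : ∀ y y', 3 ≤ Z.dist (ι y) (ι y') →
      ∃ w : Y.Walk y y', w.length = Z.dist (ι y) (ι y')) :
    ∀ y y', Z.dist (ι y) (ι y') ≤ Y.dist y y' ∧
      Y.dist y y' ≤ Z.dist (ι y) (ι y') + 2 := by
  intro y y'
  let f : Y →g Z := ⟨ι, hedge _ _⟩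
  have hreach : Y.Reachable y y' := hY.preconnected y y'
  refine ⟨f.dist_map_le hreach, ?_⟩
  obtain hsmall | hlarge := lt_or_ge (Z.dist (ι y) (ι y')) 3
  · interval_cases hd : Z.dist (ι y) (ι y')
    · -- `Z.dist` is also `0` on unreachable pairs; connectivity of `Y` transported by `f` excludes that.
      simp [hinj ((hreach.map f).dist_eq_zero_iff.mp hd)]
    · exact (h1 y y' hd).trans (by norm_num)
    · exact h2 y y' hd
  · obtain ⟨w, hw⟩ := h3 y y' hlarge
    exact hw ▸ (SimpleGraph.dist_le w).trans (Nat.le_add_right _ _)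

/-- Abstract form of the quasi-isometric embedding of the crossing graph in the
arc graph.  Let `ι` be an injective vertex map from a connected graph `Y` to a
connected graph `Z` sending edges to edges.  Suppose: if `d_Z(ι y, ι y') = 1`
then `d_Y(y, y') ≤ 2`; if `d_Z(ι y, ι y') = 2` then `d_Y(y, y') ≤ 4`; and if
`d_Z(ι y, ι y') ≥ 3` then there is a walk in `Y` from `y` to `y'` of length
`d_Z(ι y, ι y')` (a `Z`-geodesic all of whose consecutive pairs are `Y`-edges).
Then `d_Z(ι y, ι y') ≤ d_Y(y, y') ≤ d_Z(ι y, ι y') + 2` for all `y, y'`. -/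
theorem crossing_graph_qi_embedding {VY VZ : Type*}
    (Y : SimpleGraph VY) (Z : SimpleGraph VZ)
    (hY : Y.Connected) (hZ : Z.Connected)
    (ι : VY → VZ) (hinj : Function.Injective ι)
    (hedge : ∀ y y', Y.Adj y y' → Z.Adj (ι y) (ι y'))
    (h1 : ∀ y y', Z.dist (ι y) (ι y') = 1 → Y.dist y y' ≤ 2)
    (h2 : ∀ y y', Z.dist (ι y) (ι y') = 2 → Y.dist y y' ≤ 4)
    (h3 : ∀ y y', 3 ≤ Z.dist (ι y) (ι y') →
      ∃ w : Y.Walk y y', w.length = Z.dist (ι y) (ι y')) :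
    ∀ y y', Z.dist (ι y) (ι y') ≤ Y.dist y y' ∧
      Y.dist y y' ≤ Z.dist (ι y) (ι y') + 2 :=
  crossing_graph_qi_embedding_general Y Z hY ι hinj hedge h1 h2 h3
end

section
/- Suppose e = {P, Q} and e′ = {P′, Q′} are edges with arc(e) = arc(e′) = α, where P, P′ ∈ ∂𝒫_α (α removable) and Q = P \ {α}, Q′ = P′ \ {α}. If there is a path P = P₀, P₁, …, P_n = P′ inside ∂𝒫_α (each Pᵢ contains α, α is removable from each, consecutive sets differ by one element ≠ α), then setting Qᵢ = Pᵢ \ {α}, each quadruple Pᵢ, Pᵢ₊₁, Qᵢ₊₁, Qᵢ is an embedded 4-cycle (square), and hence e and e′ are parallel (lie in the same hyperplane). -/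
variable {A : Type*} [DecidableEq A]

/-- An embedded 4-cycle (square) in the graph on a collection `Pols` of finite
sets whose edges join sets with symmetric difference one. -/
def IsSquareIn (Pols : Set (Finset A)) (a b c d : Finset A) : Prop :=
  a ∈ Pols ∧ b ∈ Pols ∧ c ∈ Pols ∧ d ∈ Pols ∧
  a ≠ b ∧ a ≠ c ∧ a ≠ d ∧ b ≠ c ∧ b ≠ d ∧ c ≠ d ∧
  (symmDiff a b).card = 1 ∧ (symmDiff b c).card = 1 ∧
  (symmDiff c d).card = 1 ∧ (symmDiff d a).card = 1

/-- Two (oriented) edges are opposite sides of a square: `(a, d)` and `(b, c)`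
for some square `a b c d`. -/
def OppEdges (Pols : Set (Finset A)) (e f : Finset A × Finset A) : Prop :=
  ∃ a b c d : Finset A, IsSquareIn Pols a b c d ∧ e = (a, d) ∧ f = (b, c)

open scoped symmDiff

namespace Finset

lemma symmDiff_erase_self {a : Finset A} {α : A} (h : α ∈ a) : a ∆ a.erase α = {α} := by
  ext x
  by_cases hx : x = α <;> simp [mem_symmDiff, hx, h]

lemma erase_symmDiff_erase (a b : Finset A) (α : A) :
    a.erase α ∆ b.erase α = (a ∆ b).erase α := by
  ext x
  simp only [mem_symmDiff, mem_erase]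
  tauto

end Finset

lemma Relation.reflTransGen_of_fin_chain {β : Type*} {r : β → β → Prop} {n : ℕ}
    (f : Fin (n + 1) → β) (h : ∀ i : Fin n, r (f i.castSucc) (f i.succ)) :
    Relation.ReflTransGen r (f 0) (f (Fin.last n)) :=
  Fin.induction .refl (fun i ih => ih.tail (h i)) (Fin.last n)

lemma isSquareIn_erase {Pols : Set (Finset A)} {α : A} {a b : Finset A}
    (ha : a ∈ Pols) (hb : b ∈ Pols) (ha' : a.erase α ∈ Pols) (hb' : b.erase α ∈ Pols)
    (hαa : α ∈ a) (hαb : α ∈ b) (hab : (a ∆ b).card = 1) (hα : α ∉ a ∆ b) :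
    IsSquareIn Pols a b (b.erase α) (a.erase α) := by
  have hba' : b.erase α ∆ a.erase α = a ∆ b := by
    rw [Finset.erase_symmDiff_erase, Finset.erase_eq_of_notMem (symmDiff_comm a b ▸ hα),
      symmDiff_comm]
  have hne_erase : ∀ {c : Finset A}, α ∈ c → ∀ d : Finset A, c ≠ d.erase α := fun hc d h =>
    Finset.notMem_erase α d (h ▸ hc)
  have hab_ne : a ≠ b := by
    rintro rfl
    simp at hab
  have hba'_ne : b.erase α ≠ a.erase α := fun h =>
    hab_ne (symmDiff_eq_bot.1 (by rw [← hba', h, symmDiff_self]))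
  refine ⟨ha, hb, hb', ha', hab_ne, hne_erase hαa b, hne_erase hαa a, hne_erase hαb b,
    hne_erase hαb a, hba'_ne, hab, ?_, hba' ▸ hab, ?_⟩
  · rw [Finset.symmDiff_erase_self hαb, Finset.card_singleton]
  · rw [symmDiff_comm, Finset.symmDiff_erase_self hαa, Finset.card_singleton]

/-- If `P₀, …, Pₙ` is a path inside `∂Pols_α` (each `Pᵢ` contains `α`, `α` is
removable from each, and consecutive sets differ by one element other than
`α`), then each quadruple `Pᵢ, Pᵢ₊₁, Pᵢ₊₁ \ {α}, Pᵢ \ {α}` is an embedded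
4-cycle, and hence the edges `{P₀, P₀ \ {α}}` and `{Pₙ, Pₙ \ {α}}` are parallel
(lie in the same hyperplane). -/
theorem path_in_boundary_gives_parallel (Pols : Set (Finset A)) (α : A)
    (n : ℕ) (P : Fin (n + 1) → Finset A)
    (hmem : ∀ i, P i ∈ Pols)
    (hα : ∀ i, α ∈ P i)
    (hrem : ∀ i, (P i).erase α ∈ Pols)
    (hadj : ∀ i : Fin n, (symmDiff (P i.castSucc) (P i.succ)).card = 1)
    (hnotα : ∀ i : Fin n, α ∉ symmDiff (P i.castSucc) (P i.succ)) :
    (∀ i : Fin n, IsSquareIn Pols (P i.castSucc) (P i.succ)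
      ((P i.succ).erase α) ((P i.castSucc).erase α)) ∧
    Relation.EqvGen (OppEdges Pols)
      (P 0, (P 0).erase α) (P (Fin.last n), (P (Fin.last n)).erase α) := by
  have hsquare : ∀ i : Fin n, IsSquareIn Pols (P i.castSucc) (P i.succ)
      ((P i.succ).erase α) ((P i.castSucc).erase α) := fun i =>
    isSquareIn_erase (hmem _) (hmem _) (hrem _) (hrem _) (hα _) (hα _) (hadj i) (hnotα i)
  refine ⟨hsquare, Relation.EqvGen.reflTransGen_le_eqvGen _ _ _ ?_⟩
  exact Relation.reflTransGen_of_fin_chain (fun i => (P i, (P i).erase α))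
    fun i => ⟨_, _, _, _, hsquare i, rfl, rfl⟩
end
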